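/- With F as the MNL potential function and θ* satisfying θ* = F(θ*) = sup_θ F(θ), for every θ with 0 ≤ θ ≤ θ* one has F(θ) ≥ θ. -/

import Mathlib

open Finset

/-- MNL expected revenue of an assortment `S`. -/
noncomputable def mnlR {N : Type*} (r v : N → ℝ) (S : Finset N) : ℝ :=
  (∑ i ∈ S, r i * v i) / (1 + ∑ i ∈ S, v i)

/-- The θ-level set: items with revenue at least θ. -/
noncomputable def levelSet {N : Type*} [Fintype N] (r : N → ℝ) (θ : ℝ) : Finset N :=
  Finset.univ.filter (fun i => θ ≤ r i)

/-- The revenue potential function F(θ) = R(L_θ). -/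
noncomputable def potF {N : Type*} [Fintype N] (r v : N → ℝ) (θ : ℝ) : ℝ :=
  mnlR r v (levelSet r θ)

/-- The right limit F(θ⁺) = R({i : r_i > θ}). -/
noncomputable def potFplus {N : Type*} [Fintype N] (r v : N → ℝ) (θ : ℝ) : ℝ :=
  mnlR r v (Finset.univ.filter (fun i => θ < r i))

/-!
For `v ≥ 0`, `θ ≤ R(S)` is equivalent to `θ ≤ ∑_{i ∈ S} (r_i - θ) v_i`. Over the level set `L_θ`
the right-hand side is `∑_i (r_i - θ)⁺ v_i`, which is antitone in `θ`; at `θ*` it equals `θ*` by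
the fixed-point equation, so for `θ ≤ θ*` it is at least `θ* ≥ θ`.
-/

section MNL

variable {N : Type*} (r v : N → ℝ)

lemma sum_sub_mul_eq (S : Finset N) (θ : ℝ) :
    ∑ i ∈ S, (r i - θ) * v i = ∑ i ∈ S, r i * v i - θ * ∑ i ∈ S, v i := by
  simp only [sub_mul, sum_sub_distrib, mul_sum]

variable {v}

lemma one_add_sum_pos (hv : ∀ i, 0 ≤ v i) (S : Finset N) : 0 < 1 + ∑ i ∈ S, v i := by
  have := sum_nonneg fun i (_ : i ∈ S) => hv i
  linarith

lemma le_mnlR_iff (hv : ∀ i, 0 ≤ v i) (S : Finset N) (θ : ℝ) :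
    θ ≤ mnlR r v S ↔ θ ≤ ∑ i ∈ S, (r i - θ) * v i := by
  rw [mnlR, le_div_iff₀ (one_add_sum_pos hv S), sum_sub_mul_eq]
  constructor <;> intro h <;> linarith

lemma mnlR_eq_iff (hv : ∀ i, 0 ≤ v i) (S : Finset N) (θ : ℝ) :
    mnlR r v S = θ ↔ ∑ i ∈ S, (r i - θ) * v i = θ := by
  rw [mnlR, div_eq_iff (one_add_sum_pos hv S).ne', sum_sub_mul_eq]
  constructor <;> intro h <;> linarith

variable [Fintype N]

lemma levelSet_subset_levelSet {θ θ' : ℝ} (h : θ ≤ θ') : levelSet r θ' ⊆ levelSet r θ := by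
  intro i hi
  simp only [levelSet, mem_filter, mem_univ, true_and] at hi ⊢
  exact h.trans hi

lemma sum_levelSet_sub_mul_antitone (hv : ∀ i, 0 ≤ v i) {θ θ' : ℝ} (h : θ ≤ θ') :
    ∑ i ∈ levelSet r θ', (r i - θ') * v i ≤ ∑ i ∈ levelSet r θ, (r i - θ) * v i :=
  calc ∑ i ∈ levelSet r θ', (r i - θ') * v i
      ≤ ∑ i ∈ levelSet r θ', (r i - θ) * v i :=
        sum_le_sum fun i _ => mul_le_mul_of_nonneg_right (by linarith) (hv i)
    _ ≤ ∑ i ∈ levelSet r θ, (r i - θ) * v i := by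
        refine sum_le_sum_of_subset_of_nonneg (levelSet_subset_levelSet r h) fun i hi _ => ?_
        have : θ ≤ r i := (mem_filter.mp hi).2
        exact mul_nonneg (by linarith) (hv i)

end MNL

theorem stmt3_general {N : Type*} [Fintype N] (r v : N → ℝ)
    (hv : ∀ i, 0 ≤ v i)
    (θstar : ℝ) (hfix : potF r v θstar = θstar) :
    ∀ θ : ℝ, 0 ≤ θ → θ ≤ θstar → θ ≤ potF r v θ := by
  intro θ _ hθ
  have hsurplus : ∑ i ∈ levelSet r θstar, (r i - θstar) * v i = θstar :=
    (mnlR_eq_iff r hv _ _).1 hfix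
  rw [potF, le_mnlR_iff r hv]
  calc θ ≤ θstar := hθ
    _ = ∑ i ∈ levelSet r θstar, (r i - θstar) * v i := hsurplus.symm
    _ ≤ ∑ i ∈ levelSet r θ, (r i - θ) * v i := sum_levelSet_sub_mul_antitone r hv hθ

/-- for every 0 ≤ θ ≤ θ*, F(θ) ≥ θ. -/
theorem stmt3 {N : Type*} [Fintype N] (r v : N → ℝ)
    (hr : ∀ i, 0 ≤ r i ∧ r i ≤ 1) (hv : ∀ i, 0 ≤ v i)
    (θstar : ℝ) (hθpos : 0 ≤ θstar) (hfix : potF r v θstar = θstar)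
    (hmax : ∀ θ : ℝ, 0 ≤ θ → potF r v θ ≤ potF r v θstar) :
    ∀ θ : ℝ, 0 ≤ θ → θ ≤ θstar → θ ≤ potF r v θ :=
  stmt3_general r v hv θstar hfix
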